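/- Let G be a finite connected simple graph of order n ≥ 9 with τ(G) = n−4 whose twin class W of cardinality n−4 induces a complete subgraph of G. If |N(W) ∖ W| = 2, where N(W) is the union of the open neighborhoods of the vertices of W, then β_p(G) = n−3. -/

import Mathlib

open Classical SimpleGraph

noncomputable section

/-- The distance from a vertex to a set of vertices. -/
def setDist {V : Type*} (G : SimpleGraph V) (u : V) (S : Set V) : ℕ :=
  sInf ((G.dist u) '' S)

/-- A locating partition of a graph: a partition of the vertex set such that every
vertex is uniquely determined by its vector of distances to the parts. -/
def IsLocatingPartition {V : Type*} (G : SimpleGraph V) (P : Set (Set V)) : Prop :=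
  Setoid.IsPartition P ∧
    ∀ u v : V, (∀ S ∈ P, setDist G u S = setDist G v S) → u = v

/-- The partition dimension: the minimum cardinality of a locating partition. -/
def partitionDim {V : Type*} (G : SimpleGraph V) : ℕ :=
  sInf {k | ∃ P : Set (Set V), IsLocatingPartition G P ∧ P.ncard = k}

/-- Two vertices are twins if they have the same neighbors other than themselves. -/
def IsTwin {V : Type*} (G : SimpleGraph V) (u v : V) : Prop :=
  G.neighborSet u \ {v} = G.neighborSet v \ {u}

/-- The twin class of a vertex. -/
def twinClass {V : Type*} (G : SimpleGraph V) (u : V) : Set V :=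
  {v | IsTwin G u v}

/-- The twin number: the maximum cardinality of a twin class. -/
def twinNumber {V : Type*} (G : SimpleGraph V) : ℕ :=
  sSup {k | ∃ u : V, (twinClass G u).ncard = k}

/-!
The vertices of the twin class `W` are pairwise twins, so they lie in distinct parts of a locating
partition; since `W` is a clique all of whose vertices are adjacent to `x ∈ N(W) ∖ W`, `|W| = n - 4`
parts are not enough. Conversely, let `N(W) ∖ W = {x, y}` and let `a, b` be the two remaining
vertices. Pairing three of `x, y, a, b` with vertices of `W` and leaving every other vertex alone
gives `n - 3` parts, and each pair can be told apart by a part adjacent to one member and not to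
the other. Such parts exist in every case because, when `x ∼ y`, each of `x, y` has a neighbour in
`{a, b}`: otherwise it would be a twin of the vertices of `W`.
-/

section

variable {V : Type*} {G : SimpleGraph V}

theorem setDist_le_dist {u z : V} {S : Set V} (hz : z ∈ S) : setDist G u S ≤ G.dist u z :=
  Nat.sInf_le ⟨z, hz, rfl⟩

theorem exists_setDist_eq_dist {u : V} {S : Set V} (hS : S.Nonempty) :
    ∃ z ∈ S, G.dist u z = setDist G u S :=
  Nat.sInf_mem (hS.image _)

theorem setDist_eq_zero_of_mem {u : V} {S : Set V} (hu : u ∈ S) : setDist G u S = 0 :=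
  Nat.sInf_eq_zero.mpr (Or.inl ⟨u, hu, SimpleGraph.dist_self⟩)

theorem mem_of_setDist_eq_zero (hG : G.Connected) {u : V} {S : Set V} (hS : S.Nonempty)
    (h : setDist G u S = 0) : u ∈ S := by
  obtain ⟨z, hz, hd⟩ := exists_setDist_eq_dist (G := G) (u := u) hS
  rwa [hG.dist_eq_zero_iff.mp (hd.trans h)]

theorem setDist_eq_one (hG : G.Connected) {u z : V} {S : Set V} (hu : u ∉ S) (hz : z ∈ S)
    (huz : G.Adj u z) : setDist G u S = 1 := by
  have hle : setDist G u S ≤ 1 := dist_eq_one_iff_adj.mpr huz ▸ setDist_le_dist hz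
  have hne : setDist G u S ≠ 0 := fun h => hu (mem_of_setDist_eq_zero hG ⟨z, hz⟩ h)
  omega

theorem two_le_setDist (hG : G.Connected) {u : V} {S : Set V} (hS : S.Nonempty) (hu : u ∉ S)
    (hadj : ∀ z ∈ S, ¬ G.Adj u z) : 2 ≤ setDist G u S := by
  obtain ⟨z, hz, hd⟩ := exists_setDist_eq_dist (G := G) (u := u) hS
  have h0 : G.dist u z ≠ 0 := fun h => hu (hG.dist_eq_zero_iff.mp h ▸ hz)
  have h1 : G.dist u z ≠ 1 := fun h => hadj z hz (dist_eq_one_iff_adj.mp h)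
  omega

theorem setDist_ne_of_adj (hG : G.Connected) {u v z : V} {S : Set V} (hz : z ∈ S)
    (huz : G.Adj u z) (hu : u ∉ S) (hv : v ∉ S) (hvS : ∀ z ∈ S, ¬ G.Adj v z) :
    setDist G u S ≠ setDist G v S := by
  rw [setDist_eq_one hG hu hz huz]
  have := two_le_setDist hG ⟨z, hz⟩ hv hvS
  omega

theorem setDist_singleton_ne_of_adj (hG : G.Connected) {u v z : V} (huz : G.Adj u z)
    (hv : v ≠ z) (hvz : ¬ G.Adj v z) : setDist G u {z} ≠ setDist G v {z} :=
  setDist_ne_of_adj hG rfl huz (G.ne_of_adj huz) hv (by simpa using hvz)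

theorem isTwin_iff {u v : V} :
    IsTwin G u v ↔ ∀ z, z ≠ u → z ≠ v → (G.Adj u z ↔ G.Adj v z) := by
  simp only [IsTwin, Set.ext_iff, Set.mem_sdiff, mem_neighborSet, Set.mem_singleton_iff]
  refine forall_congr' fun z => ⟨fun h hzu hzv => ?_, fun h => ?_⟩
  · exact ⟨fun hu => (h.mp ⟨hu, hzv⟩).1, fun hv => (h.mpr ⟨hv, hzu⟩).1⟩
  · exact ⟨fun ⟨hu, hzv⟩ => ⟨(h (G.ne_of_adj hu).symm hzv).mp hu, (G.ne_of_adj hu).symm⟩,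
      fun ⟨hv, hzu⟩ => ⟨(h hzu (G.ne_of_adj hv).symm).mpr hv, (G.ne_of_adj hv).symm⟩⟩

theorem IsTwin.symm {u v : V} (h : IsTwin G u v) : IsTwin G v u :=
  Eq.symm h

theorem IsTwin.trans {u v w : V} (huv : IsTwin G u v) (hvw : IsTwin G v w) : IsTwin G u w := by
  rw [isTwin_iff] at *
  intro z hzu hzw
  by_cases hzv : z = v
  · subst hzv
    rcases eq_or_ne u w with rfl | huw
    · rfl
    have hwz : w ≠ z := fun h => hzw h.symm
    have huz : u ≠ z := fun h => hzu h.symm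
    rw [G.adj_comm u, G.adj_comm w, hvw u huz huw, G.adj_comm w, huv w huw.symm hwz]
  · exact (huv z hzu hzv).trans (hvw z hzv hzw)

/-- A shortest path from `v` to `z` can start at the twin `u` instead. -/
theorem IsTwin.dist_le (hG : G.Connected) {u v z : V} (h : IsTwin G u v) (hzu : z ≠ u)
    (hzv : z ≠ v) : G.dist u z ≤ G.dist v z := by
  obtain ⟨p, hp⟩ := (hG.preconnected v z).exists_walk_length_eq_dist
  cases p with
  | nil => exact absurd rfl hzv
  | @cons _ c _ hvc q =>
    rw [Walk.length_cons] at hp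
    by_cases hcu : c = u
    · subst hcu
      have := SimpleGraph.dist_le q
      omega
    · have huc : G.Adj u c := (isTwin_iff.mp h c hcu (G.ne_of_adj hvc).symm).mpr hvc
      have := SimpleGraph.dist_le (Walk.cons huc q)
      rw [Walk.length_cons] at this
      omega

theorem IsTwin.dist_eq (hG : G.Connected) {u v z : V} (h : IsTwin G u v) (hzu : z ≠ u)
    (hzv : z ≠ v) : G.dist u z = G.dist v z :=
  (h.dist_le hG hzu hzv).antisymm (h.symm.dist_le hG hzv hzu)

theorem IsTwin.setDist_eq (hG : G.Connected) {u v : V} {S : Set V} (h : IsTwin G u v)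
    (hu : u ∉ S) (hv : v ∉ S) : setDist G u S = setDist G v S :=
  congrArg sInf <| Set.image_congr fun _ hz =>
    h.dist_eq hG (fun h => hu (h ▸ hz)) (fun h => hv (h ▸ hz))

theorem isTwin_of_mem_twinClass {u v w : V} (hv : v ∈ twinClass G u) (hw : w ∈ twinClass G u) :
    IsTwin G v w :=
  IsTwin.trans (IsTwin.symm hv) hw

theorem isLocatingPartition_of_separated (hG : G.Connected) {P : Set (Set V)}
    (hP : Setoid.IsPartition P)
    (hsep : ∀ S ∈ P, ∀ u ∈ S, ∀ v ∈ S, u ≠ v → ∃ T ∈ P, setDist G u T ≠ setDist G v T) :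
    IsLocatingPartition G P := by
  refine ⟨hP, fun u v huv => ?_⟩
  obtain ⟨S, ⟨hS, huS⟩, -⟩ := hP.2 u
  have hSne : S.Nonempty := Set.nonempty_iff_ne_empty.mpr fun h => hP.1 (h ▸ hS)
  have hvS : v ∈ S :=
    mem_of_setDist_eq_zero hG hSne ((huv S hS).symm.trans (setDist_eq_zero_of_mem huS))
  by_contra hne
  obtain ⟨T, hT, hTne⟩ := hsep S hS u huS v hvS hne
  exact hTne (huv T hT)

theorem IsLocatingPartition.eq_of_isTwin (hG : G.Connected) {P : Set (Set V)}
    (hP : IsLocatingPartition G P) {u v : V} {S : Set V} (h : IsTwin G u v) (hS : S ∈ P)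
    (hu : u ∈ S) (hv : v ∈ S) : u = v := by
  refine hP.2 u v fun T hT => ?_
  by_cases huT : u ∈ T
  · have hTS : T = S := (hP.1.2 u).unique ⟨hT, huT⟩ ⟨hS, hu⟩
    rw [setDist_eq_zero_of_mem huT, setDist_eq_zero_of_mem (hTS ▸ hv)]
  · have hvT : v ∉ T := fun hvT => huT ((hP.1.2 v).unique ⟨hT, hvT⟩ ⟨hS, hv⟩ ▸ hu)
    exact h.setDist_eq hG huT hvT

/-- The twins lie in distinct parts. With only `|W|` parts, `x` would share its part with some
`w₀ ∈ W`, and every other part, containing a vertex of `W`, would be at distance `1` from both. -/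
theorem IsLocatingPartition.ncard_lt_ncard [Finite V] (hG : G.Connected) {P : Set (Set V)}
    (hP : IsLocatingPartition G P) {W : Set V} {x : V}
    (htw : ∀ u ∈ W, ∀ v ∈ W, IsTwin G u v) (hcl : ∀ u ∈ W, ∀ v ∈ W, u ≠ v → G.Adj u v)
    (hxW : x ∉ W) (hx : ∀ w ∈ W, G.Adj w x) : W.ncard < P.ncard := by
  choose part hpart using fun v => (hP.1.2 v).exists
  have huniq : ∀ v, ∀ S ∈ P, v ∈ S → S = part v := fun v S hS hv =>
    (hP.1.2 v).unique ⟨hS, hv⟩ (hpart v)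
  have hinj : Set.InjOn part W := fun w hw w' hw' h =>
    hP.eq_of_isTwin hG (htw w hw w' hw') (hpart w).1 (hpart w).2 (h ▸ (hpart w').2)
  have hsub : part '' W ⊆ P := Set.image_subset_iff.mpr fun w _ => (hpart w).1
  have hle : W.ncard ≤ P.ncard := hinj.ncard_image ▸ Set.ncard_le_ncard hsub
  refine hle.lt_of_ne fun hcard => hxW ?_
  have himg : part '' W = P := Set.eq_of_subset_of_ncard_le hsub (by rw [hinj.ncard_image, hcard])
  obtain ⟨w₀, hw₀, hxw₀⟩ : part x ∈ part '' W := himg ▸ (hpart x).1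
  suffices x = w₀ from this ▸ hw₀
  refine hP.2 x w₀ fun S hS => ?_
  by_cases hxS : x ∈ S
  · rw [setDist_eq_zero_of_mem hxS, setDist_eq_zero_of_mem (huniq x S hS hxS ▸ hxw₀ ▸ (hpart w₀).2)]
  · obtain ⟨w, hw, rfl⟩ : S ∈ part '' W := himg ▸ hS
    have hw₀S : w₀ ∉ part w := fun h => hxS (huniq w₀ _ hS h ▸ hxw₀ ▸ (hpart x).2)
    have hww₀ : w ≠ w₀ := fun h => hw₀S (h ▸ (hpart w).2)
    rw [setDist_eq_one hG hxS (hpart w).2 (hx w hw).symm,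
      setDist_eq_one hG hw₀S (hpart w).2 (hcl w₀ hw₀ w hw hww₀.symm)]

theorem partitionDim_eq {P : Set (Set V)} {k : ℕ} (hP : IsLocatingPartition G P)
    (hk : P.ncard = k) (hmin : ∀ Q, IsLocatingPartition G Q → k ≤ Q.ncard) :
    partitionDim G = k :=
  le_antisymm (Nat.sInf_le ⟨P, hP, hk⟩) <|
    le_csInf ⟨k, P, hP, hk⟩ fun _ ⟨Q, hQ, hm⟩ => hm ▸ hmin Q hQ

section WithSingletons

def withSingletons (Q : Set (Set V)) : Set (Set V) :=
  Q ∪ (fun v => {v}) '' (⋃₀ Q)ᶜ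

variable {Q : Set (Set V)}

theorem mem_withSingletons_of_mem {S : Set V} (hS : S ∈ Q) : S ∈ withSingletons Q :=
  Or.inl hS

theorem singleton_mem_withSingletons {v : V} (hv : v ∉ ⋃₀ Q) : {v} ∈ withSingletons Q :=
  Or.inr ⟨v, hv, rfl⟩

theorem isPartition_withSingletons (hQ : ∅ ∉ Q) (hd : Q.PairwiseDisjoint id) :
    Setoid.IsPartition (withSingletons Q) := by
  refine ⟨?_, fun v => ?_⟩
  · rintro (h | ⟨v, -, h⟩)
    exacts [hQ h, Set.singleton_ne_empty v h]
  by_cases hv : v ∈ ⋃₀ Q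
  · obtain ⟨S, hS, hvS⟩ := hv
    refine ⟨S, ⟨Or.inl hS, hvS⟩, ?_⟩
    rintro T ⟨hT | ⟨w, hw, rfl⟩, hvT⟩
    · exact hd.elim hT hS (Set.not_disjoint_iff.mpr ⟨v, hvT, hvS⟩)
    · exact absurd (Set.mem_singleton_iff.mp hvT ▸ ⟨S, hS, hvS⟩) hw
  · refine ⟨{v}, ⟨Or.inr ⟨v, hv, rfl⟩, rfl⟩, ?_⟩
    rintro T ⟨hT | ⟨w, -, rfl⟩, hvT⟩
    · exact absurd ⟨T, hT, hvT⟩ hv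
    · rw [Set.mem_singleton_iff.mp hvT]

theorem ncard_withSingletons [Finite V] :
    (withSingletons Q).ncard = Q.ncard + (⋃₀ Q)ᶜ.ncard := by
  rw [withSingletons, Set.ncard_union_eq, Set.ncard_image_of_injective _ Set.singleton_injective]
  refine Set.disjoint_left.mpr fun S hS ⟨v, hv, hvS⟩ => hv ⟨S, hS, hvS ▸ rfl⟩

theorem isLocatingPartition_withSingletons (hG : G.Connected) (hQ : ∅ ∉ Q)
    (hd : Q.PairwiseDisjoint id)
    (hsep : ∀ S ∈ Q, ∀ u ∈ S, ∀ v ∈ S, u ≠ v →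
      ∃ T ∈ withSingletons Q, setDist G u T ≠ setDist G v T) :
    IsLocatingPartition G (withSingletons Q) := by
  refine isLocatingPartition_of_separated hG (isPartition_withSingletons hQ hd) ?_
  rintro S (hS | ⟨w, -, rfl⟩) u hu v hv huv
  exacts [hsep S hS u hu v hv huv, absurd (hu.trans hv.symm) huv]

end WithSingletons

theorem exists_isLocatingPartition_of_three_pairs [Fintype V] (hG : G.Connected)
    {m₁ t₁ m₂ t₂ m₃ t₃ : V} (hl : [m₁, t₁, m₂, t₂, m₃, t₃].Nodup)
    (h₁ : ∃ T ∈ withSingletons {{m₁, t₁}, {m₂, t₂}, {m₃, t₃}}, setDist G m₁ T ≠ setDist G t₁ T)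
    (h₂ : ∃ T ∈ withSingletons {{m₁, t₁}, {m₂, t₂}, {m₃, t₃}}, setDist G m₂ T ≠ setDist G t₂ T)
    (h₃ : ∃ T ∈ withSingletons {{m₁, t₁}, {m₂, t₂}, {m₃, t₃}}, setDist G m₃ T ≠ setDist G t₃ T) :
    ∃ P, IsLocatingPartition G P ∧ P.ncard = Fintype.card V - 3 := by
  set Q : Set (Set V) := {{m₁, t₁}, {m₂, t₂}, {m₃, t₃}}
  have hne := hl
  simp only [List.nodup_cons, List.mem_cons, List.not_mem_nil, or_false, not_or,
    List.nodup_nil] at hne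
  have hpair : ∀ m t, (∃ T ∈ withSingletons Q, setDist G m T ≠ setDist G t T) →
      ∀ u ∈ ({m, t} : Set V), ∀ v ∈ ({m, t} : Set V), u ≠ v →
        ∃ T ∈ withSingletons Q, setDist G u T ≠ setDist G v T := by
    rintro m t ⟨T, hT, h⟩ u (rfl | rfl) v (rfl | rfl) huv
    exacts [absurd rfl huv, ⟨T, hT, h⟩, ⟨T, hT, h.symm⟩, absurd rfl huv]
  have hunion : ⋃₀ Q = (([m₁, t₁, m₂, t₂, m₃, t₃].toFinset : Finset V) : Set V) := by
    ext v
    simp only [Q, Set.sUnion_insert, Set.sUnion_singleton, Set.union_insert, Set.union_singleton,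
      Set.mem_insert_iff, Set.mem_singleton_iff, List.toFinset_cons, List.toFinset_nil,
      insert_empty_eq, Finset.coe_insert, Finset.coe_singleton]
    grind
  have hQ : Q.ncard = 3 := by
    refine Set.ncard_eq_three.mpr ⟨_, _, _, ?_, ?_, ?_, rfl⟩ <;>
      · intro h
        have := h ▸ Set.mem_insert _ _
        simp only [Set.mem_insert_iff, Set.mem_singleton_iff] at this
        grind
  refine ⟨withSingletons Q, isLocatingPartition_withSingletons hG ?_ ?_ ?_, ?_⟩
  · simp only [Q, Set.mem_insert_iff, Set.mem_singleton_iff, not_or]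
    exact ⟨(Set.insert_nonempty _ _).ne_empty.symm, (Set.insert_nonempty _ _).ne_empty.symm,
      (Set.insert_nonempty _ _).ne_empty.symm⟩
  · simp only [Q, Set.pairwiseDisjoint_insert, Set.pairwiseDisjoint_singleton, true_and,
      Set.mem_insert_iff, Set.mem_singleton_iff, forall_eq_or_imp, forall_eq, id,
      Set.disjoint_insert_left, Set.disjoint_singleton_left]
    grind
  · rintro S (rfl | rfl | rfl)
    exacts [hpair _ _ h₁, hpair _ _ h₂, hpair _ _ h₃]
  · rw [ncard_withSingletons, hQ, Set.ncard_compl, hunion, Set.ncard_coe_finset,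
      Nat.card_eq_fintype_card, List.toFinset_card_of_nodup hl]
    have := hl.length_le_card
    simp only [List.length_cons, List.length_nil] at this ⊢
    omega

theorem exists_isLocatingPartition_ncard_eq_card_sub_three [Fintype V] (hG : G.Connected)
    {W : Set V} (hcl : ∀ u ∈ W, ∀ v ∈ W, u ≠ v → G.Adj u v) (hW : 3 < W.ncard) {x y a b : V}
    (haW : a ∉ W) (hbW : b ∉ W) (hxy : x ≠ y) (hab : a ≠ b)
    (hx : ∀ w ∈ W, G.Adj w x) (hy : ∀ w ∈ W, G.Adj w y)
    (ha : ∀ w ∈ W, ¬ G.Adj w a) (hb : ∀ w ∈ W, ¬ G.Adj w b)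
    (hxab : G.Adj x y → G.Adj x a ∨ G.Adj x b) (hyab : G.Adj x y → G.Adj y a ∨ G.Adj y b) :
    ∃ P, IsLocatingPartition G P ∧ P.ncard = Fintype.card V - 3 := by
  wlog hxa : G.Adj x y → G.Adj x a generalizing a b
  · exact this hbW haW hab.symm hb ha (fun h => (hxab h).symm) (fun h => (hyab h).symm)
      fun h => (hxab h).resolve_left fun h' => hxa fun _ => h'
  obtain ⟨w₁, w₂, w₃, w₄, hw₁, hw₂, hw₃, hw₄, h12, h13, h14, h23, h24, h34⟩ :=
    (Set.three_lt_ncard_iff W.toFinite).mp hW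
  have hWne : ∀ w ∈ W, w ≠ x ∧ w ≠ y ∧ w ≠ a ∧ w ≠ b := fun w hw =>
    ⟨G.ne_of_adj (hx w hw), G.ne_of_adj (hy w hw), fun h => haW (h ▸ hw), fun h => hbW (h ▸ hw)⟩
  have hxyab : x ≠ a ∧ x ≠ b ∧ y ≠ a ∧ y ≠ b := by
    refine ⟨?_, ?_, ?_, ?_⟩ <;> rintro rfl
    exacts [ha w₁ hw₁ (hx w₁ hw₁), hb w₁ hw₁ (hx w₁ hw₁), ha w₁ hw₁ (hy w₁ hw₁),
      hb w₁ hw₁ (hy w₁ hw₁)]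
  by_cases hadj : G.Adj x y
  · by_cases hya : G.Adj y a
    · refine exists_isLocatingPartition_of_three_pairs hG (m₁ := x) (t₁ := w₁) (m₂ := y)
        (t₂ := w₂) (m₃ := b) (t₃ := w₃) (by grind) ?_ ?_ ?_
      · exact ⟨{a}, singleton_mem_withSingletons (by grind),
          setDist_singleton_ne_of_adj hG (hxa hadj) (by grind) (ha w₁ hw₁)⟩
      · exact ⟨{a}, singleton_mem_withSingletons (by grind),
          setDist_singleton_ne_of_adj hG hya (by grind) (ha w₂ hw₂)⟩
      · exact ⟨{w₄}, singleton_mem_withSingletons (by grind),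
          (setDist_singleton_ne_of_adj hG (hcl w₃ hw₃ w₄ hw₄ h34) (by grind)
            fun h => hb w₄ hw₄ h.symm).symm⟩
    · have hyb : G.Adj y b := (hyab hadj).resolve_left hya
      refine exists_isLocatingPartition_of_three_pairs hG (m₁ := x) (t₁ := w₁) (m₂ := y)
        (t₂ := w₂) (m₃ := a) (t₃ := b) (by grind) ?_ ?_ ?_
      · exact ⟨{a, b}, mem_withSingletons_of_mem (by simp), setDist_ne_of_adj hG (by simp)
          (hxa hadj) (by grind) (by grind) (by simp [ha w₁ hw₁, hb w₁ hw₁])⟩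
      · exact ⟨{a, b}, mem_withSingletons_of_mem (by simp), setDist_ne_of_adj hG (by simp)
          hyb (by grind) (by grind) (by simp [ha w₂ hw₂, hb w₂ hw₂])⟩
      · exact ⟨{y, w₂}, mem_withSingletons_of_mem (by simp), (setDist_ne_of_adj hG (by simp)
          hyb.symm (by grind) (by grind) (by simp [G.adj_comm a, hya, ha w₂ hw₂])).symm⟩
  · refine exists_isLocatingPartition_of_three_pairs hG (m₁ := y) (t₁ := w₁) (m₂ := a)
      (t₂ := w₂) (m₃ := b) (t₃ := w₃) (by grind) ?_ ?_ ?_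
    · exact ⟨{x}, singleton_mem_withSingletons (by grind),
        (setDist_singleton_ne_of_adj hG (hx w₁ hw₁) hxy.symm fun h => hadj h.symm).symm⟩
    · exact ⟨{w₄}, singleton_mem_withSingletons (by grind),
        (setDist_singleton_ne_of_adj hG (hcl w₂ hw₂ w₄ hw₄ h24) (by grind)
          fun h => ha w₄ hw₄ h.symm).symm⟩
    · exact ⟨{w₄}, singleton_mem_withSingletons (by grind),
        (setDist_singleton_ne_of_adj hG (hcl w₃ hw₃ w₄ hw₄ h34) (by grind)
          fun h => hb w₄ hw₄ h.symm).symm⟩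

section Boundary

variable {W : Set V}

theorem adj_of_mem_boundary (htw : ∀ v ∈ W, ∀ w ∈ W, IsTwin G v w) {x w : V}
    (hx : x ∈ (⋃ w ∈ W, G.neighborSet w) \ W) (hw : w ∈ W) : G.Adj w x := by
  obtain ⟨hx, hxW⟩ := hx
  obtain ⟨w₀, hw₀, hadj⟩ := Set.mem_iUnion₂.mp hx
  exact (isTwin_iff.mp (htw w₀ hw₀ w hw) x (fun h => hxW (h ▸ hw₀)) fun h => hxW (h ▸ hw)).mp hadj

theorem not_adj_of_not_mem_boundary {v w : V} (hv : v ∉ W ∪ (⋃ w ∈ W, G.neighborSet w) \ W)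
    (hw : w ∈ W) : ¬ G.Adj w v := fun h =>
  hv (Or.inr ⟨Set.mem_iUnion₂.mpr ⟨w, hw, h⟩, fun hvW => hv (Or.inl hvW)⟩)

/-- Otherwise `x` would be a twin of `u`. -/
theorem exists_adj_not_mem_boundary {u x : V} (hu : W = twinClass G u)
    (hcl : ∀ v ∈ W, ∀ w ∈ W, v ≠ w → G.Adj v w) (hx : x ∈ (⋃ w ∈ W, G.neighborSet w) \ W)
    (hxB : ∀ z ∈ (⋃ w ∈ W, G.neighborSet w) \ W, z ≠ x → G.Adj x z) :
    ∃ z ∉ W ∪ (⋃ w ∈ W, G.neighborSet w) \ W, G.Adj x z := by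
  subst hu
  by_contra! hout
  have htw : ∀ v ∈ twinClass G u, ∀ w ∈ twinClass G u, IsTwin G v w :=
    fun v hv w hw => isTwin_of_mem_twinClass hv hw
  have hu : u ∈ twinClass G u := (rfl : IsTwin G u u)
  refine hx.2 (isTwin_iff.mpr fun z hzu hzx => ⟨fun h => ?_, fun h => ?_⟩)
  · by_cases hz : z ∈ twinClass G u
    · exact (adj_of_mem_boundary htw hx hz).symm
    · exact hxB z ⟨Set.mem_iUnion₂.mpr ⟨u, hu, h⟩, hz⟩ hzx
  · by_cases hz : z ∈ twinClass G u
    · exact hcl u hu z hz (Ne.symm hzu)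
    · by_cases hzB : z ∈ (⋃ w ∈ twinClass G u, G.neighborSet w) \ twinClass G u
      · exact adj_of_mem_boundary htw hzB hu
      · exact absurd h (hout z fun h' => h'.elim hz hzB)

theorem exists_isLocatingPartition_of_boundary_eq_pair [Fintype V] (hG : G.Connected) {u : V}
    (hu : W = twinClass G u) (hcl : ∀ v ∈ W, ∀ w ∈ W, v ≠ w → G.Adj v w)
    (hW : 3 < W.ncard) {x y a b : V} (hB : (⋃ w ∈ W, G.neighborSet w) \ W = {x, y})
    (hxy : x ≠ y) (hC : (W ∪ {x, y})ᶜ = {a, b}) (hab : a ≠ b) :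
    ∃ P, IsLocatingPartition G P ∧ P.ncard = Fintype.card V - 3 := by
  have htw : ∀ v ∈ W, ∀ w ∈ W, IsTwin G v w := hu ▸ fun v hv w hw => isTwin_of_mem_twinClass hv hw
  set B := (⋃ w ∈ W, G.neighborSet w) \ W
  rw [← hB] at hC
  have hxB : x ∈ B := hB ▸ Set.mem_insert x {y}
  have hyB : y ∈ B := hB ▸ Set.mem_insert_of_mem x (Set.mem_singleton y)
  have haC : a ∈ (W ∪ B)ᶜ := hC ▸ Set.mem_insert a {b}
  have hbC : b ∈ (W ∪ B)ᶜ := hC ▸ Set.mem_insert_of_mem a (Set.mem_singleton b)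
  have hout : ∀ v ∈ B, (∀ z ∈ B, z ≠ v → G.Adj v z) → G.Adj v a ∨ G.Adj v b := by
    intro v hv hvB
    obtain ⟨z, hz, hvz⟩ := exists_adj_not_mem_boundary hu hcl hv hvB
    rcases (hC ▸ hz : z ∈ ({a, b} : Set V)) with rfl | rfl
    exacts [Or.inl hvz, Or.inr hvz]
  exact exists_isLocatingPartition_ncard_eq_card_sub_three hG hcl hW
    (fun h => haC (Or.inl h)) (fun h => hbC (Or.inl h)) hxy hab
    (fun _ => adj_of_mem_boundary htw hxB) (fun _ => adj_of_mem_boundary htw hyB)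
    (fun _ => not_adj_of_not_mem_boundary haC) (fun _ => not_adj_of_not_mem_boundary hbC)
    (fun h => hout x hxB (by simp [hB, h])) (fun h => hout y hyB (by simp [hB, h.symm]))

end Boundary

end

theorem partitionDim_eq_of_small_boundary_general {V : Type*} [Fintype V]
    (G : SimpleGraph V) (hG : G.Connected) (n : ℕ) (hn : Fintype.card V = n)
    (h9 : 9 ≤ n)
    (W : Set V) (hW : ∃ u : V, W = twinClass G u)
    (hWcard : W.ncard = n - 4)
    (hclique : ∀ u ∈ W, ∀ v ∈ W, u ≠ v → G.Adj u v)
    (hN : (((⋃ w ∈ W, G.neighborSet w)) \ W).ncard = 2) :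
    partitionDim G = n - 3 := by
  obtain ⟨u, hu⟩ := hW
  obtain ⟨x, y, hxy, hB⟩ := Set.ncard_eq_two.mp hN
  have hxB : x ∈ (⋃ w ∈ W, G.neighborSet w) \ W := hB ▸ Set.mem_insert x {y}
  obtain ⟨a, b, hab, hC⟩ : ∃ a b, a ≠ b ∧ (W ∪ {x, y})ᶜ = {a, b} := by
    refine Set.ncard_eq_two.mp ?_
    rw [Set.ncard_compl, Set.ncard_union_eq (hB ▸ Set.disjoint_sdiff_right), hWcard,
      Set.ncard_pair hxy, Nat.card_eq_fintype_card]
    omega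
  obtain ⟨P, hP, hPcard⟩ :=
    exists_isLocatingPartition_of_boundary_eq_pair hG hu hclique (by omega) hB hxy hC hab
  have htw : ∀ v ∈ W, ∀ w ∈ W, IsTwin G v w := hu ▸ fun v hv w hw => isTwin_of_mem_twinClass hv hw
  refine partitionDim_eq hP (by rw [hPcard, hn]) fun Q hQ => ?_
  have := hQ.ncard_lt_ncard hG htw hclique hxB.2 fun _ => adj_of_mem_boundary htw hxB
  omega

/-- Let `G` be a connected graph of order `n ≥ 9` with `τ(G) = n - 4` whose
maximum twin class `W` induces a complete subgraph. If `|N(W) \ W| = 2`,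
then `β_p(G) = n - 3`. -/
theorem partitionDim_eq_of_small_boundary {V : Type*} [Fintype V]
    (G : SimpleGraph V) (hG : G.Connected) (n : ℕ) (hn : Fintype.card V = n)
    (h9 : 9 ≤ n) (hτ : twinNumber G = n - 4)
    (W : Set V) (hW : ∃ u : V, W = twinClass G u)
    (hWcard : W.ncard = n - 4)
    (hclique : ∀ u ∈ W, ∀ v ∈ W, u ≠ v → G.Adj u v)
    (hN : (((⋃ w ∈ W, G.neighborSet w)) \ W).ncard = 2) :
    partitionDim G = n - 3 :=
  partitionDim_eq_of_small_boundary_general G hG n hn h9 W hW hWcard hclique hN
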